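/- Let p be a real number and define P(x) = p·x². Let L be the second-order differential operator LG(z) = ((1-z²)G'(z))' - 4G'(z)z - 6G(z) = (1-z²)G''(z) - 6zG'(z) - 6G(z). Then the function B(z) = -(z/6)p satisfies, for every real z, L(L+2)B(z) = (1/2)P'''(z)(1-z²) - 4P''(z)z - 6P'(z); both sides equal -20pz. -/

import Mathlib

/-- The second-order differential operator
`LG(z) = (1-z²)G''(z) - 6zG'(z) - 6G(z)`. -/
noncomputable def Lop (G : ℝ → ℝ) : ℝ → ℝ :=
  fun z => (1 - z ^ 2) * deriv (deriv G) z - 6 * z * deriv G z - 6 * G z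

lemma deriv_const_mul_sq (p : ℝ) : deriv (fun x : ℝ => p * x ^ 2) = fun x => 2 * p * x := by
  ext x
  rw [((hasDerivAt_pow 2 x).const_mul p).deriv]
  ring

lemma Lop_const_mul_id (a : ℝ) : Lop (fun z => a * z) = fun z => -12 * a * z := by
  ext z
  simp only [Lop, deriv_const_mul_id', deriv_const']
  ring

lemma Lop_add_two_mul_const_mul_id (a : ℝ) :
    (fun w => Lop (fun z => a * z) w + 2 * (a * w)) = fun w => -10 * a * w := by
  rw [Lop_const_mul_id]
  funext w
  ring

lemma Lop_Lop_add_two_mul_const_mul_id (a : ℝ) :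
    Lop (fun w => Lop (fun z => a * z) w + 2 * (a * w)) = fun z => 120 * a * z := by
  rw [Lop_add_two_mul_const_mul_id, Lop_const_mul_id]
  funext z
  ring

/-- For the quadratic profile `P(x) = p·x²`, the function `B(z) = -(z/6)p` satisfies
`L(L+2)B(z) = (1/2)P'''(z)(1-z²) - 4P''(z)z - 6P'(z)` for every real `z`;
both sides equal `-20pz`. -/
theorem stmt_7 (p : ℝ) (P B : ℝ → ℝ)
    (hP : ∀ x, P x = p * x ^ 2)
    (hB : ∀ z, B z = -(z / 6) * p) :
    ∀ z : ℝ,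
      Lop (fun w => Lop B w + 2 * B w) z
        = 1 / 2 * deriv (deriv (deriv P)) z * (1 - z ^ 2)
          - 4 * deriv (deriv P) z * z - 6 * deriv P z ∧
      Lop (fun w => Lop B w + 2 * B w) z = -20 * p * z ∧
      1 / 2 * deriv (deriv (deriv P)) z * (1 - z ^ 2)
          - 4 * deriv (deriv P) z * z - 6 * deriv P z = -20 * p * z := by
  obtain rfl : B = fun z => -(p / 6) * z := funext fun z => by rw [hB]; ring
  obtain rfl : P = fun x => p * x ^ 2 := funext hP
  intro z
  simp only [Lop_Lop_add_two_mul_const_mul_id, deriv_const_mul_sq, deriv_const_mul_id',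
    deriv_const']
  exact ⟨by ring, by ring, by ring⟩
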